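/- If F̄_min < F < F̄_max, then there exists a unique x* ∈ (0,1) with Q̄(x*) = 0; moreover Q̄(x) < 0 for all x ∈ (0, x*) and Q̄(x) > 0 for all x ∈ (x*, 1), so that for the replicator dynamics ẋ = x(1−x)Q̄(x) of the bribery game the interior equilibrium x* is unstable and both boundary states x = 0 and x = 1 are attracting (bistability). -/

import Mathlib

/-- The bribery-game gradient function Q̄. -/
noncomputable def Qbar (N : ℕ) (c τ β rp α F h γ p q : ℝ) (x : ℝ) : ℝ :=
  F * c / N - c - 2 * α * β * τ * rp + β * τ * rp
    + ((N : ℝ) - 1) / N * γ * h * (q - p)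
    - α * β * τ * rp * (∑ k ∈ Finset.range (N - 1), (1 - x) ^ (k + 1))
    + (1 - α) * β * τ * rp * (∑ k ∈ Finset.range (N - 1), x ^ (k + 1))

/-- The lower threshold F̄_min for the pool multiplier in the bribery game. -/
noncomputable def Fbarmin (N : ℕ) (c τ β rp α h γ p q : ℝ) : ℝ :=
  (N * c - ((N : ℝ) - 1) * γ * h * (q - p) - N * β * τ * rp * (1 - 2 * α)
    - N * ((N : ℝ) - 1) * (1 - α) * β * τ * rp) / c

/-- The upper threshold F̄_max for the pool multiplier in the bribery game. -/
noncomputable def Fbarmax (N : ℕ) (c τ β rp α h γ p q : ℝ) : ℝ :=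
  (N * c - ((N : ℝ) - 1) * γ * h * (q - p) - N * β * τ * rp
    + N * α * β * τ * rp * ((N : ℝ) + 1)) / c

/-!
The power sums `∑ x^(k+1)` and `∑ (1-x)^(k+1)` enter `Q̄` with weights `(1-α)βτr_p ≥ 0` and
`-αβτr_p ≤ 0`, whose difference `βτr_p` is positive, so `Q̄` is strictly increasing on `[0,1]`.
Its endpoint values are `Q̄(0) = c(F - F̄_max)/N < 0` and `Q̄(1) = c(F - F̄_min)/N > 0`, so by the
intermediate value theorem it has exactly one zero in `(0,1)`, below which it is negative and
above which it is positive.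
-/

open Finset Set

theorem StrictMonoOn.exists_unique_eq_of_lt_of_lt
    {X Y : Type*} [ConditionallyCompleteLinearOrder X] [DenselyOrdered X] [TopologicalSpace X]
    [OrderTopology X] [LinearOrder Y] [TopologicalSpace Y] [OrderClosedTopology Y]
    {f : X → Y} {a b : X} {v : Y} (hab : a ≤ b) (hf : ContinuousOn f (Icc a b))
    (hmono : StrictMonoOn f (Icc a b)) (ha : f a < v) (hb : v < f b) :
    ∃ z ∈ Ioo a b, f z = v ∧ (∀ y ∈ Ioo a b, f y = v → y = z) ∧
      (∀ x ∈ Ioo a z, f x < v) ∧ (∀ x ∈ Ioo z b, v < f x) := by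
  obtain ⟨z, hz, hfz⟩ := intermediate_value_Ioo hab hf ⟨ha, hb⟩
  have hzI : z ∈ Icc a b := Ioo_subset_Icc_self hz
  refine ⟨z, hz, hfz, fun y hy hfy => ?_, fun x hx => ?_, fun x hx => ?_⟩
  · exact hmono.injOn (Ioo_subset_Icc_self hy) hzI (hfy.trans hfz.symm)
  · exact hfz ▸ hmono ⟨hx.1.le, hx.2.le.trans hzI.2⟩ hzI hx.2
  · exact hfz ▸ hmono hzI ⟨hzI.1.trans hx.1.le, hx.2.le⟩ hx.1

theorem strictMonoOn_sum_range_pow_succ {R : Type*} [Semiring R] [PartialOrder R]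
    [IsStrictOrderedRing R] {n : ℕ} (hn : n ≠ 0) :
    StrictMonoOn (fun x : R => ∑ k ∈ range n, x ^ (k + 1)) (Ici 0) := by
  intro x hx y _ hxy
  apply sum_lt_sum (fun k _ => pow_le_pow_left₀ hx hxy.le _)
  exact ⟨0, mem_range.2 (Nat.pos_of_ne_zero hn), by simpa using hxy⟩

theorem continuous_Qbar (N : ℕ) (c τ β rp α F h γ p q : ℝ) :
    Continuous (Qbar N c τ β rp α F h γ p q) := by
  unfold Qbar
  fun_prop

theorem Qbar_strictMonoOn {N : ℕ} (hN : 2 ≤ N) {c τ β rp α : ℝ} (F h γ p q : ℝ)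
    (hτ : 0 < τ) (hβ : 0 < β) (hrp : 0 < rp) (hα0 : 0 ≤ α) (hα1 : α ≤ 1) :
    StrictMonoOn (Qbar N c τ β rp α F h γ p q) (Icc 0 1) := by
  set S : ℝ → ℝ := fun x => ∑ k ∈ range (N - 1), x ^ (k + 1) with hS
  have hSmono : StrictMonoOn S (Ici 0) := strictMonoOn_sum_range_pow_succ (by omega)
  intro x hx y hy hxy
  have hSlo : S (1 - y) < S (1 - x) :=
    hSmono (mem_Ici.2 (sub_nonneg.2 hy.2)) (mem_Ici.2 (sub_nonneg.2 hx.2)) (by linarith)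
  have hShi : S x < S y := hSmono (mem_Ici.2 hx.1) (mem_Ici.2 hy.1) hxy
  have hdiff : Qbar N c τ β rp α F h γ p q y - Qbar N c τ β rp α F h γ p q x
      = α * (β * τ * rp) * (S (1 - x) - S (1 - y)) + (1 - α) * (β * τ * rp) * (S y - S x) := by
    simp only [Qbar, hS]
    ring
  have hB : 0 < β * τ * rp := by positivity
  rw [← sub_pos, hdiff]
  -- the two weights are nonnegative and sum to `βτr_p > 0`, so one of them is positive
  rcases hα0.eq_or_lt with rfl | hα
  · nlinarith
  · nlinarith [mul_pos (mul_pos hα hB) (sub_pos.2 hSlo),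
      mul_nonneg (mul_nonneg (sub_nonneg.2 hα1) hB.le) (sub_pos.2 hShi).le]

theorem sum_range_one_pow_succ_sub_one {N : ℕ} (hN : 0 < N) :
    ∑ k ∈ range (N - 1), (1 : ℝ) ^ (k + 1) = (N : ℝ) - 1 := by
  simp [Nat.cast_sub (Nat.one_le_iff_ne_zero.2 hN.ne')]

theorem Qbar_zero {N : ℕ} (hN : 0 < N) {c : ℝ} (hc : c ≠ 0) (τ β rp α F h γ p q : ℝ) :
    Qbar N c τ β rp α F h γ p q 0 = c * (F - Fbarmax N c τ β rp α h γ p q) / N := by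
  have hN' : (N : ℝ) ≠ 0 := by positivity
  simp only [Qbar, Fbarmax, sub_zero, zero_pow (Nat.succ_ne_zero _), sum_const_zero, mul_zero,
    add_zero, sum_range_one_pow_succ_sub_one hN]
  field_simp
  ring

theorem Qbar_one {N : ℕ} (hN : 0 < N) {c : ℝ} (hc : c ≠ 0) (τ β rp α F h γ p q : ℝ) :
    Qbar N c τ β rp α F h γ p q 1 = c * (F - Fbarmin N c τ β rp α h γ p q) / N := by
  have hN' : (N : ℝ) ≠ 0 := by positivity
  simp only [Qbar, Fbarmin, sub_self, zero_pow (Nat.succ_ne_zero _), sum_const_zero, mul_zero,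
    sub_zero, sum_range_one_pow_succ_sub_one hN]
  field_simp
  ring

theorem bg_bistability_general (N : ℕ) (hN : 2 ≤ N) (c τ β rp α F h γ p q : ℝ)
    (hc : 0 < c) (hτ : 0 < τ) (hβ : 0 < β) (hrp : 0 < rp) (hα0 : 0 ≤ α) (hα1 : α ≤ 1)
    (hFlo : Fbarmin N c τ β rp α h γ p q < F) (hFhi : F < Fbarmax N c τ β rp α h γ p q) :
    ∃ xs : ℝ, 0 < xs ∧ xs < 1 ∧ Qbar N c τ β rp α F h γ p q xs = 0 ∧
      (∀ y : ℝ, 0 < y → y < 1 → Qbar N c τ β rp α F h γ p q y = 0 → y = xs) ∧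
      (∀ x : ℝ, 0 < x → x < xs → Qbar N c τ β rp α F h γ p q x < 0) ∧
      (∀ x : ℝ, xs < x → x < 1 → 0 < Qbar N c τ β rp α F h γ p q x) := by
  have hNpos : 0 < N := by omega
  have hNreal : (0 : ℝ) < N := by exact_mod_cast hNpos
  have hQ0 : Qbar N c τ β rp α F h γ p q 0 < 0 := by
    rw [Qbar_zero hNpos hc.ne']
    exact div_neg_of_neg_of_pos (mul_neg_of_pos_of_neg hc (sub_neg.2 hFhi)) hNreal
  have hQ1 : 0 < Qbar N c τ β rp α F h γ p q 1 := by
    rw [Qbar_one hNpos hc.ne']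
    exact div_pos (mul_pos hc (sub_pos.2 hFlo)) hNreal
  obtain ⟨xs, ⟨hxs0, hxs1⟩, hzero, huniq, hneg, hpos⟩ :=
    (Qbar_strictMonoOn hN F h γ p q hτ hβ hrp hα0 hα1).exists_unique_eq_of_lt_of_lt
      zero_le_one (continuous_Qbar ..).continuousOn hQ0 hQ1
  exact ⟨xs, hxs0, hxs1, hzero, fun y hy0 hy1 => huniq y ⟨hy0, hy1⟩,
    fun x hx0 hx => hneg x ⟨hx0, hx⟩, fun x hx hx1 => hpos x ⟨hx, hx1⟩⟩

/-- If F̄_min < F < F̄_max then Q̄ has a unique zero x* in (0,1), with Q̄ < 0 on (0,x*)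
and Q̄ > 0 on (x*,1): the interior equilibrium x* of the replicator dynamics
ẋ = x(1−x)Q̄(x) of the bribery game is unstable and both boundary states x = 0 and
x = 1 are attracting (bistability). -/
theorem bg_bistability (N : ℕ) (hN : 2 ≤ N) (c τ β rp α F h γ p q : ℝ)
    (hc : 0 < c) (hτ : 0 < τ) (hβ : 0 < β) (hrp : 0 < rp) (hα0 : 0 ≤ α) (hα1 : α ≤ 1)
    (hh : 0 < h) (hγ0 : 0 < γ) (hγ1 : γ ≤ 1) (hp0 : 0 ≤ p) (hp1 : p ≤ 1)
    (hq0 : 0 ≤ q) (hq1 : q ≤ 1)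
    (hFlo : Fbarmin N c τ β rp α h γ p q < F) (hFhi : F < Fbarmax N c τ β rp α h γ p q) :
    ∃ xs : ℝ, 0 < xs ∧ xs < 1 ∧ Qbar N c τ β rp α F h γ p q xs = 0 ∧
      (∀ y : ℝ, 0 < y → y < 1 → Qbar N c τ β rp α F h γ p q y = 0 → y = xs) ∧
      (∀ x : ℝ, 0 < x → x < xs → Qbar N c τ β rp α F h γ p q x < 0) ∧
      (∀ x : ℝ, xs < x → x < 1 → 0 < Qbar N c τ β rp α F h γ p q x) :=
  bg_bistability_general N hN c τ β rp α F h γ p q hc hτ hβ hrp hα0 hα1 hFlo hFhi
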